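/- Let m ∈ ℕ, (i_1, …, i_m) ∈ N^m and a ∈ A. If the word (i_1, …, i_m) at a is not reduced (i.e. its length ℓ is strictly less than m), then there exist j_2, …, j_{m−1} ∈ N such that the word (i_2, …, i_m) at a and the word (i_1, j_2, …, j_{m−1}) at a have the same target and the same σ-composite. -/

import Mathlib

open Pointwise

variable {N : Type*} {A : Type*}

/-- The element `(i j)^m ▷ a` for the action of `F₂(N)` on `A`. -/
def altIter (act : N → A → A) (i j : N) (a : A) : ℕ → A
  | 0 => a
  | m + 1 => act i (act j (altIter act i j a m))

/-- The set `Θ(i,j;a)`. -/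
def ThetaSet (act : N → A → A) (i j : N) (a : A) : Set A :=
  {x | ∃ m : ℕ, x = altIter act i j a m ∨ x = altIter act j i a m}

/-- The set of `ℕ₀`-linear combinations of elements of `s`. -/
def NSpan (s : Set (N →₀ ℝ)) : Set (N →₀ ℝ) :=
  (AddSubmonoid.closure s : Set (N →₀ ℝ))

/-- A generalized root system: a transitive action of `F₂(N)` on `A` (axiom (1)),
roots `root a ⊆ ℝ^{(N)}` with simple roots `α n a` forming a basis (axiom (2)),
and maps `σ i a ∈ GL(ℝ^{(N)})`, satisfying axioms (3)-(7). -/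
structure GRS (N : Type*) (A : Type*) where
  act : N → A → A
  act_invol : ∀ n a, act n (act n a) = a
  act_trans : ∀ a b : A, ∃ l : List N, l.foldr act a = b
  root : A → Set (N →₀ ℝ)
  α : N → A → N →₀ ℝ
  α_mem : ∀ n a, α n a ∈ root a
  α_indep : ∀ a, LinearIndependent ℝ fun n => α n a
  α_span : ∀ a, Submodule.span ℝ (Set.range fun n => α n a) = ⊤
  σ : N → A → (N →₀ ℝ) ≃ₗ[ℝ] (N →₀ ℝ)
  ax3 : ∀ a, root a =
    root a ∩ NSpan (Set.range fun n => α n a) ∪ -(root a ∩ NSpan (Set.range fun n => α n a))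
  ax4 : ∀ i a, (Set.range fun r : ℝ => r • α i a) ∩ root a = {α i a, -α i a}
  ax5_root : ∀ i a, ⇑(σ i a) '' root a = root (act i a)
  ax5_diag : ∀ i a, σ i a (α i a) = -α i (act i a)
  ax5_off : ∀ i a j, j ≠ i →
    ∃ m : ℕ, σ i a (α j a) = α j (act i a) + (m : ℝ) • α i (act i a)
  ax6 : ∀ i a v, σ i (act i a) (σ i a v) = v
  ax7 : ∀ a (i j : N), i ≠ j →
    (root a ∩ {β | ∃ p q : ℕ, β = (p : ℝ) • α i a + (q : ℝ) • α j a}).Finite →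
    (ThetaSet act i j a).Finite ∧
      (ThetaSet act i j a).ncard ∣
        (root a ∩ {β | ∃ p q : ℕ, β = (p : ℝ) • α i a + (q : ℝ) • α j a}).ncard

/-- The positive roots `R⁺_a`. -/
def GRS.pos (G : GRS N A) (a : A) : Set (N →₀ ℝ) :=
  G.root a ∩ NSpan (Set.range fun n => G.α n a)

/-- The target `i₁ ⋯ i_m ▷ a` of the word `(i₁, …, i_m)` at `a`. -/
def GRS.target (G : GRS N A) (l : List N) (a : A) : A :=
  l.foldr G.act a

/-- The σ-composite `σ_{i₁,b₁} ∘ ⋯ ∘ σ_{i_m,b_m}` of the word `(i₁, …, i_m)` at `a`. -/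
noncomputable def GRS.wmap (G : GRS N A) : List N → A → (N →₀ ℝ) ≃ₗ[ℝ] (N →₀ ℝ)
  | [], _ => LinearEquiv.refl ℝ _
  | i :: l, a => (G.wmap l a).trans (G.σ i (G.target l a))

/-- The length `ℓ` of a word at `a`: the minimal length of a word at `a`
with the same target and the same σ-composite. -/
noncomputable def GRS.len (G : GRS N A) (l : List N) (a : A) : ℕ :=
  sInf {m | ∃ l' : List N, l'.length = m ∧
    G.target l' a = G.target l a ∧ G.wmap l' a = G.wmap l a}

/-- A word of length `m` at `a` is reduced if `ℓ = m`. -/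
def GRS.Reduced (G : GRS N A) (l : List N) (a : A) : Prop :=
  G.len l a = l.length

/-- `m_{i,j;a} = |R_a ∩ (ℕ₀ α_{i,a} + ℕ₀ α_{j,a})|`. -/
noncomputable def GRS.mij (G : GRS N A) (i j : N) (a : A) : ℕ :=
  (G.root a ∩ {β | ∃ p q : ℕ, β = (p : ℝ) • G.α i a + (q : ℝ) • G.α j a}).ncard

/-- The alternating word `(i₁, …, i_m)` with `i_k = i` for `k` odd (leftmost letter `i`). -/
def altList (i j : N) : ℕ → List N
  | 0 => []
  | m + 1 => i :: altList j i m

/-- The alternating word of length `m` in the letters `i,j` whose rightmost letter is `i`. -/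
def altR (i j : N) : ℕ → List N
  | 0 => []
  | m + 1 => altR j i m ++ [i]

/-- `a_m = i_m ⋯ i_1 ▷ a` for the alternating sequence with `i_k = i` for odd `k`. -/
def aIter (act : N → A → A) (i j : N) (a : A) : ℕ → A
  | 0 => a
  | m + 1 => act (if m % 2 = 0 then i else j) (aIter act i j a m)

/-- The set of real roots `R^{re}_a`. -/
def GRS.reroot (G : GRS N A) (a : A) : Set (N →₀ ℝ) :=
  {β | ∃ (b : A) (l : List N) (n : N), G.target l b = a ∧ β = G.wmap l b (G.α n b)}

/-- The word `C(i,j;a)`: alternating of length `m_{i,j;a} - 1` with leftmost letter `i`. -/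
noncomputable def GRS.Cword (G : GRS N A) (i j : N) (a : A) : List N :=
  altList i j (G.mij i j a - 1)

/-! The length `ℓ` of a word has the parity of its number of letters: the inversion set of a word
(positive roots sent to negative ones) changes by exactly one root with each letter added, and it
depends only on the target and the σ-composite. So a non-reduced word `(i₁, …, i_m)` equals a word
of length at most `m - 2`, which pairs `i₁ i₁` pad to length exactly `m - 2`; prefixing `i₁` and
cancelling `i₁ i₁` against the original word gives the claim. -/

open scoped symmDiff in
theorem Set.ncard_symmDiff_singleton_mod_two {α : Type*} {s : Set α} (hs : s.Finite) (x : α) :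
    (s ∆ {x}).ncard % 2 = (s.ncard + 1) % 2 := by
  by_cases hx : x ∈ s
  · have hdiff : s ∆ {x} = s \ {x} := by
      ext y
      simp only [Set.mem_symmDiff, Set.mem_sdiff, Set.mem_singleton_iff]
      constructor
      · rintro (h | ⟨rfl, h⟩)
        exacts [h, absurd hx h]
      · exact Or.inl
    have := Set.ncard_sdiff_singleton_add_one hx hs
    rw [hdiff]
    omega
  · have hins : s ∆ {x} = insert x s := by
      ext y
      simp only [Set.mem_symmDiff, Set.mem_insert_iff, Set.mem_singleton_iff]
      constructor
      · rintro (⟨h, -⟩ | ⟨rfl, -⟩)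
        exacts [Or.inr h, Or.inl rfl]
      · rintro (rfl | h)
        exacts [Or.inr ⟨rfl, hx⟩, Or.inl ⟨h, by rintro rfl; exact hx h⟩]
    rw [hins, Set.ncard_insert_of_notMem hx hs]

namespace GRS

variable (G : GRS N A)

@[simp]
lemma target_cons (i : N) (l : List N) (a : A) : G.target (i :: l) a = G.act i (G.target l a) :=
  rfl

lemma wmap_cons (i : N) (l : List N) (a : A) :
    G.wmap (i :: l) a = (G.wmap l a).trans (G.σ i (G.target l a)) :=
  rfl

lemma coe_wmap_cons (i : N) (l : List N) (a : A) :
    ⇑(G.wmap (i :: l) a) = G.σ i (G.target l a) ∘ G.wmap l a :=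
  rfl

noncomputable def simpleBasis (a : A) : Module.Basis N ℝ (N →₀ ℝ) :=
  .mk (G.α_indep a) (G.α_span a).ge

@[simp]
lemma simpleBasis_apply (a : A) (n : N) : G.simpleBasis a n = G.α n a :=
  Module.Basis.mk_apply _ _ n

@[simp]
lemma simpleBasis_repr_α (a : A) (n : N) :
    (G.simpleBasis a).repr (G.α n a) = Finsupp.single n 1 := by
  rw [← simpleBasis_apply, Module.Basis.repr_self]

lemma simpleBasis_repr_nonneg {a : A} {v : N →₀ ℝ}
    (hv : v ∈ NSpan (Set.range fun n => G.α n a)) (j : N) :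
    0 ≤ (G.simpleBasis a).repr v j := by
  change v ∈ AddSubmonoid.closure _ at hv
  induction hv using AddSubmonoid.closure_induction with
  | mem x hx =>
    obtain ⟨n, rfl⟩ := hx
    classical
    rw [simpleBasis_repr_α, Finsupp.single_apply]
    split_ifs <;> norm_num
  | zero => simp
  | add x y _ _ hx hy => simpa using add_nonneg hx hy

lemma simpleBasis_repr_σ_of_ne (i : N) (a : A) {j : N} (hj : j ≠ i) (v : N →₀ ℝ) :
    (G.simpleBasis (G.act i a)).repr (G.σ i a v) j = (G.simpleBasis a).repr v j := by
  suffices Finsupp.lapply j ∘ₗ (G.simpleBasis (G.act i a)).repr.toLinearMap ∘ₗ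
      (G.σ i a).toLinearMap = Finsupp.lapply j ∘ₗ (G.simpleBasis a).repr.toLinearMap from
    LinearMap.congr_fun this v
  refine (G.simpleBasis a).ext fun n => ?_
  simp only [LinearMap.comp_apply, LinearEquiv.coe_coe, Finsupp.lapply_apply, simpleBasis_apply]
  rcases eq_or_ne n i with rfl | hni
  · simp [G.ax5_diag, hj.symm]
  · obtain ⟨m, hm⟩ := G.ax5_off i a n hni
    simp [hm, hj.symm]

lemma eq_smul_α_of_simpleBasis_repr_eq_zero {a : A} {i : N} {β : N →₀ ℝ}
    (h : ∀ j, j ≠ i → (G.simpleBasis a).repr β j = 0) :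
    β = (G.simpleBasis a).repr β i • G.α i a := by
  refine (G.simpleBasis a).repr.injective (Finsupp.ext fun j => ?_)
  rcases eq_or_ne j i with rfl | hj
  · simp
  · simp [h j hj, hj.symm]

lemma eq_zero_of_mem_nspan_of_neg_mem {a : A} {v : N →₀ ℝ}
    (hv : v ∈ NSpan (Set.range fun n => G.α n a)) (hnv : -v ∈ NSpan (Set.range fun n => G.α n a)) :
    v = 0 := by
  refine (G.simpleBasis a).repr.injective (Finsupp.ext fun j => ?_)
  have h1 := G.simpleBasis_repr_nonneg hv j
  have h2 := G.simpleBasis_repr_nonneg hnv j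
  simp only [map_neg, Finsupp.neg_apply, map_zero, Finsupp.zero_apply] at h2 ⊢
  linarith

lemma zero_notMem_root [Nonempty N] (a : A) : (0 : N →₀ ℝ) ∉ G.root a := by
  obtain ⟨i⟩ := ‹Nonempty N›
  intro h0
  have hline : (0 : N →₀ ℝ) ∈ (Set.range fun r : ℝ => r • G.α i a) ∩ G.root a :=
    ⟨⟨0, zero_smul _ _⟩, h0⟩
  have hαne : G.α i a ≠ 0 := (G.α_indep a).ne_zero i
  rw [G.ax4] at hline
  rcases hline with h | h
  · exact hαne h.symm
  · exact hαne (neg_eq_zero.mp (Set.mem_singleton_iff.mp h).symm)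

lemma α_mem_pos (n : N) (a : A) : G.α n a ∈ G.pos a :=
  ⟨G.α_mem n a, AddSubmonoid.subset_closure ⟨n, rfl⟩⟩

lemma neg_notMem_pos [Nonempty N] {a : A} {β : N →₀ ℝ} (hβ : β ∈ G.pos a) : -β ∉ G.pos a :=
  fun h => G.zero_notMem_root a (G.eq_zero_of_mem_nspan_of_neg_mem hβ.2 h.2 ▸ hβ.1)

lemma mem_pos_or_neg_mem_pos {a : A} {β : N →₀ ℝ} (hβ : β ∈ G.root a) :
    β ∈ G.pos a ∨ -β ∈ G.pos a := by
  rwa [G.ax3 a] at hβ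

lemma σ_mem_root {i : N} {a : A} {β : N →₀ ℝ} (hβ : β ∈ G.root a) :
    G.σ i a β ∈ G.root (G.act i a) :=
  G.ax5_root i a ▸ Set.mem_image_of_mem _ hβ

/-- `σ i a` preserves every coordinate but the `i`-th, so a positive root that it makes negative is
a multiple of `α i a`, hence `α i a` itself by axiom (4). -/
lemma σ_mem_pos [Nonempty N] {i : N} {a : A} {β : N →₀ ℝ} (hβ : β ∈ G.pos a)
    (hne : β ≠ G.α i a) : G.σ i a β ∈ G.pos (G.act i a) := by
  refine (G.mem_pos_or_neg_mem_pos (G.σ_mem_root hβ.1)).resolve_right fun hneg => ?_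
  have hline : β = (G.simpleBasis a).repr β i • G.α i a :=
    G.eq_smul_α_of_simpleBasis_repr_eq_zero fun j hj => by
      have h1 := G.simpleBasis_repr_nonneg hβ.2 j
      have h2 := G.simpleBasis_repr_nonneg hneg.2 j
      rw [map_neg, Finsupp.neg_apply, G.simpleBasis_repr_σ_of_ne i a hj] at h2
      linarith
  have hβα : β ∈ ({G.α i a, -G.α i a} : Set (N →₀ ℝ)) := G.ax4 i a ▸ ⟨⟨_, hline.symm⟩, hβ.1⟩
  rcases hβα with h | h
  · exact hne h
  · exact G.neg_notMem_pos (G.α_mem_pos i a) (Set.mem_singleton_iff.mp h ▸ hβ)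

lemma σ_mem_neg_pos_iff [Nonempty N] {i : N} {c : A} {γ : N →₀ ℝ} (hγ : γ ∈ G.root c) :
    G.σ i c γ ∈ -G.pos (G.act i c) ↔ Xor (γ ∈ -G.pos c) (γ = G.α i c ∨ γ = -G.α i c) := by
  have hα := G.α_mem_pos i c
  have hα' := G.α_mem_pos i (G.act i c)
  by_cases hp : γ = G.α i c
  · subst hp
    simp [Set.mem_neg, G.ax5_diag, hα', G.neg_notMem_pos hα]
  by_cases hn : γ = -G.α i c
  · subst hn
    simp [Set.mem_neg, G.ax5_diag, hα, G.neg_notMem_pos hα']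
  rcases G.mem_pos_or_neg_mem_pos hγ with h | h
  · simp [Set.mem_neg, hp, hn, G.neg_notMem_pos h, G.neg_notMem_pos (G.σ_mem_pos h hp)]
  · have hσ := G.σ_mem_pos h (fun h' => hn (neg_eq_iff_eq_neg.mp h'))
    rw [map_neg] at hσ
    simp [Set.mem_neg, hp, hn, h, hσ]

lemma image_wmap_root (l : List N) (a : A) :
    ⇑(G.wmap l a) '' G.root a = G.root (G.target l a) := by
  induction l with
  | nil => exact Set.image_id _
  | cons i l ih =>
    rw [coe_wmap_cons, Set.image_comp, ih, G.ax5_root]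
    rfl

def invSet (l : List N) (a : A) : Set (N →₀ ℝ) :=
  {β | β ∈ G.pos a ∧ G.wmap l a β ∈ -G.pos (G.target l a)}

lemma invSet_nil [Nonempty N] (a : A) : G.invSet [] a = ∅ :=
  Set.eq_empty_of_forall_notMem fun _ ⟨hβ, hneg⟩ => G.neg_notMem_pos hβ hneg

lemma exists_mem_pos_iff_eq_or_eq_neg [Nonempty N] {a : A} {δ : N →₀ ℝ} (hδ : δ ∈ G.root a) :
    ∃ γ ∈ G.pos a, ∀ β ∈ G.pos a, (β = δ ∨ β = -δ ↔ β = γ) := by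
  rcases G.mem_pos_or_neg_mem_pos hδ with h | h
  · refine ⟨δ, h, fun β hβ => ⟨?_, Or.inl⟩⟩
    rintro (rfl | rfl)
    exacts [rfl, absurd hβ (G.neg_notMem_pos h)]
  · refine ⟨-δ, h, fun β hβ => ⟨?_, Or.inr⟩⟩
    rintro (rfl | rfl)
    exacts [absurd hβ (by simpa using G.neg_notMem_pos h), rfl]

open scoped symmDiff in
/-- Appending a letter `i` on the left changes the inversion set by exactly one root, the positive
one of `±(wmap l a)⁻¹ (α i c)`. -/
lemma invSet_cons [Nonempty N] (i : N) (l : List N) (a : A) :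
    ∃ γ, G.invSet (i :: l) a = G.invSet l a ∆ {γ} := by
  have hδ : (G.wmap l a).symm (G.α i (G.target l a)) ∈ G.root a := by
    obtain ⟨β, hβ, hTβ⟩ := (G.image_wmap_root l a).symm ▸ G.α_mem i (G.target l a)
    rwa [← hTβ, LinearEquiv.symm_apply_apply]
  obtain ⟨γ, hγ, hiff⟩ := G.exists_mem_pos_iff_eq_or_eq_neg hδ
  refine ⟨γ, Set.ext fun β => ?_⟩
  by_cases hβ : β ∈ G.pos a
  · have hflip : G.wmap l a β = G.α i (G.target l a) ∨ G.wmap l a β = -G.α i (G.target l a) ↔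
        β = γ := by
      rw [← hiff β hβ, LinearEquiv.eq_symm_apply, ← map_neg, LinearEquiv.eq_symm_apply]
    have hTβ : G.wmap l a β ∈ G.root (G.target l a) :=
      G.image_wmap_root l a ▸ Set.mem_image_of_mem _ hβ.1
    simp only [invSet, Set.mem_ofPred_eq, Set.mem_symmDiff, Set.mem_singleton_iff, target_cons,
      coe_wmap_cons, Function.comp_apply, G.σ_mem_neg_pos_iff hTβ, hflip, hβ, true_and, Xor]
  · simp only [invSet, Set.mem_ofPred_eq, Set.mem_symmDiff, Set.mem_singleton_iff, hβ, false_and,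
      false_or, not_false_eq_true, and_true, false_iff]
    exact fun h => hβ (h ▸ hγ)

lemma finite_invSet [Nonempty N] (l : List N) (a : A) : (G.invSet l a).Finite := by
  induction l with
  | nil => simp [invSet_nil]
  | cons i l ih =>
    obtain ⟨γ, h⟩ := G.invSet_cons i l a
    exact h ▸ ih.symmDiff (Set.finite_singleton γ)

lemma ncard_invSet_mod_two [Nonempty N] (l : List N) (a : A) :
    (G.invSet l a).ncard % 2 = l.length % 2 := by
  induction l with
  | nil => simp [invSet_nil]
  | cons i l ih =>
    obtain ⟨γ, h⟩ := G.invSet_cons i l a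
    rw [h, Set.ncard_symmDiff_singleton_mod_two (G.finite_invSet l a), List.length_cons]
    omega

lemma exists_length_eq_len (l : List N) (a : A) :
    ∃ w : List N, w.length = G.len l a ∧
      G.target w a = G.target l a ∧ G.wmap w a = G.wmap l a := by
  unfold len
  exact Nat.sInf_mem (s := {m | ∃ w : List N, w.length = m ∧
    G.target w a = G.target l a ∧ G.wmap w a = G.wmap l a}) ⟨_, l, rfl, rfl, rfl⟩

lemma len_mod_two [Nonempty N] (l : List N) (a : A) : G.len l a % 2 = l.length % 2 := by
  obtain ⟨w, hw, ht, hm⟩ := G.exists_length_eq_len l a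
  have hinv : G.invSet w a = G.invSet l a := by simp only [invSet, ht, hm]
  rw [← hw, ← G.ncard_invSet_mod_two, hinv, G.ncard_invSet_mod_two]

lemma target_cons_cons_self (i : N) (w : List N) (a : A) :
    G.target (i :: i :: w) a = G.target w a :=
  G.act_invol i _

lemma wmap_cons_cons_self (i : N) (w : List N) (a : A) :
    G.wmap (i :: i :: w) a = G.wmap w a :=
  LinearEquiv.ext fun v => G.ax6 i (G.target w a) (G.wmap w a v)

lemma target_replicate_append (i : N) (k : ℕ) (w : List N) (a : A) :
    G.target (List.replicate (2 * k) i ++ w) a = G.target w a := by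
  induction k with
  | zero => rfl
  | succ k ih => rw [Nat.mul_succ, List.replicate_succ, List.replicate_succ, List.cons_append,
      List.cons_append, target_cons_cons_self, ih]

lemma wmap_replicate_append (i : N) (k : ℕ) (w : List N) (a : A) :
    G.wmap (List.replicate (2 * k) i ++ w) a = G.wmap w a := by
  induction k with
  | zero => rfl
  | succ k ih => rw [Nat.mul_succ, List.replicate_succ, List.replicate_succ, List.cons_append,
      List.cons_append, wmap_cons_cons_self, ih]

lemma exists_length_eq_of_len_le [Nonempty N] {l : List N} {a : A} {n : ℕ}
    (hle : G.len l a ≤ n) (hpar : n % 2 = l.length % 2) :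
    ∃ w : List N, w.length = n ∧ G.target w a = G.target l a ∧ G.wmap w a = G.wmap l a := by
  obtain ⟨w, hw, ht, hm⟩ := G.exists_length_eq_len l a
  obtain ⟨i⟩ := ‹Nonempty N›
  refine ⟨List.replicate (2 * ((n - w.length) / 2)) i ++ w, ?_,
    by rw [target_replicate_append, ht], by rw [wmap_replicate_append, hm]⟩
  have := G.len_mod_two l a
  simp only [List.length_append, List.length_replicate]
  omega

end GRS

theorem stmt9_general (G : GRS N A) (i₁ : N) (l : List N) (a : A)
    (h : G.len (i₁ :: l) a < (i₁ :: l).length) :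
    ∃ l' : List N, l'.length = l.length - 1 ∧
      G.target l a = G.target (i₁ :: l') a ∧ G.wmap l a = G.wmap (i₁ :: l') a := by
  have : Nonempty N := ⟨i₁⟩
  have hpar := G.len_mod_two (i₁ :: l) a
  simp only [List.length_cons] at h hpar
  obtain ⟨w, hw, ht, hm⟩ := G.exists_length_eq_of_len_le (l := i₁ :: l) (a := a)
    (n := l.length - 1) (by omega) (by simp only [List.length_cons]; omega)
  refine ⟨w, hw, ?_, ?_⟩
  · rw [GRS.target_cons, ht, ← GRS.target_cons, GRS.target_cons_cons_self]
  · rw [GRS.wmap_cons, ht, hm, ← GRS.wmap_cons, GRS.wmap_cons_cons_self]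

/-- if the word `(i₁, i₂, …, i_m)` at `a` is not reduced, then the word
`(i₂, …, i_m)` at `a` equals (same target, same σ-composite) a word
`(i₁, j₂, …, j_{m−1})` at `a`. -/
theorem stmt9 [Nonempty N] [Nonempty A] (G : GRS N A) (i₁ : N) (l : List N) (a : A)
    (h : G.len (i₁ :: l) a < (i₁ :: l).length) :
    ∃ l' : List N, l'.length = l.length - 1 ∧
      G.target l a = G.target (i₁ :: l') a ∧ G.wmap l a = G.wmap (i₁ :: l') a :=
  stmt9_general G i₁ l a h
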